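/- Let X be a compact Hausdorff uniform space, f_{0,∞} a sequence of continuous self-maps of X, A = (a_{ij}) an N×N transition matrix, and V₁,…,V_N nonempty closed subsets of X. Assume (i) f_n(V_i) ⊇ ⋃_{j : a_{ij}=1} V_j for all i, n, and (ii) for every α ∈ Σ_N^+(A) and every symmetric open entourage γ there exists M ≥ 1 such that for all m ≥ M and all n ≥ 0, V_α^{m,n} × V_α^{m,n} ⊂ γ. Then each intersection ⋂_{m≥0} V_α^{m,n} is a single point x_n(α); the sets Λ_n = {x_n(α) : α ∈ Σ_N^+(A)} are nonempty compact with f_n(Λ_n) = Λ_{n+1}; the maps π_n : Σ_N^+(A) → Λ_n, π_n(α) = x_n(α), are surjective, equi-continuous, and satisfy f_n ∘ π_n = π_{n+1} ∘ σ_A. Consequently h(f_{0,∞}, Λ_0) ≤ log λ(A). -/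

import Mathlib

open Filter Set
open scoped Uniformity

/-- `itr f i n = f (i+n-1) ∘ ⋯ ∘ f i`, the composition of `n` maps of the sequence `f`
starting at index `i` (so `itr f i 0 = id`). -/
def itr {X : Type*} (f : ℕ → X → X) (i : ℕ) : ℕ → X → X
  | 0 => id
  | n + 1 => fun x => f (i + n) (itr f i n x)

/-- `E` is an `(n,γ)`-separated set for the nonautonomous system `f`. -/
def IsSep {X : Type*} (f : ℕ → X → X) (n : ℕ) (γ : Set (X × X)) (E : Set X) : Prop :=
  ∀ x ∈ E, ∀ y ∈ E, x ≠ y → ∃ j < n, (itr f 0 j x, itr f 0 j y) ∉ γ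

/-- `F` `(n,γ)`-spans the set `K` for the nonautonomous system `f`. -/
def Spans {X : Type*} (f : ℕ → X → X) (n : ℕ) (γ : Set (X × X)) (F K : Set X) : Prop :=
  ∀ x ∈ K, ∃ y ∈ F, ∀ j < n, (itr f 0 j x, itr f 0 j y) ∈ γ

/-- Maximal cardinality of an `(n,γ)`-separated subset of `Λ`. -/
noncomputable def sepCard {X : Type*} (f : ℕ → X → X) (Λ : Set X) (n : ℕ)
    (γ : Set (X × X)) : ℕ :=
  sSup {m | ∃ E : Finset X, ↑E ⊆ Λ ∧ IsSep f n γ ↑E ∧ E.card = m}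

/-- Minimal cardinality of a subset of `Λ` that `(n,γ)`-spans `Λ`. -/
noncomputable def spanCard {X : Type*} (f : ℕ → X → X) (Λ : Set X) (n : ℕ)
    (γ : Set (X × X)) : ℕ :=
  sInf {m | ∃ F : Finset X, ↑F ⊆ Λ ∧ Spans f n γ ↑F Λ ∧ F.card = m}


/-- Topological entropy of the nonautonomous system `f` on the set `Λ`, defined via
separated sets; by antitonicity in the entourage, the supremum over all entourages agrees
with the limit along the net of symmetric open entourages used in the paper. -/
noncomputable def entropy {X : Type*} [UniformSpace X] (f : ℕ → X → X) (Λ : Set X) : EReal :=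
  ⨆ γ ∈ 𝓤 X, atTop.limsup fun n : ℕ =>
    ((Real.log (sepCard f Λ n γ) / n : ℝ) : EReal)

/-- The one-sided subshift of finite type `Σ_N^+(A)` determined by the transition
matrix `A`. -/
def SigmaA {N : ℕ} (A : Matrix (Fin N) (Fin N) ℕ) : Type :=
  {s : ℕ → Fin N // ∀ j : ℕ, A (s j) (s (j + 1)) = 1}

/-- The shift map `σ_A` on `Σ_N^+(A)`. -/
def shiftA {N : ℕ} {A : Matrix (Fin N) (Fin N) ℕ} (s : SigmaA A) : SigmaA A :=
  ⟨fun j => s.1 (j + 1), fun j => s.2 (j + 1)⟩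

/-- The metric `ρ(α, β) = ∑_i d(α_i, β_i)/2^i` on `Σ_N^+(A)`. -/
noncomputable def rho {N : ℕ} {A : Matrix (Fin N) (Fin N) ℕ} (α β : SigmaA A) : ℝ :=
  ∑' i : ℕ, if α.1 i = β.1 i then 0 else (1 / 2 : ℝ) ^ i

/-- The spectral radius `λ(A) = lim ‖Aⁿ‖^{1/n}` of the transition matrix `A`
(Gelfand formula, with `‖A‖` the sum of all entries). -/
noncomputable def lamA {N : ℕ} (A : Matrix (Fin N) (Fin N) ℕ) : ℝ :=
  Filter.atTop.limsup fun n : ℕ =>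
    ((∑ i : Fin N, ∑ j : Fin N, (A ^ n) i j : ℕ) : ℝ) ^ ((n : ℝ)⁻¹)

/-- `A` is a transition matrix: all entries are `0` or `1` and every row and every column
contains a `1`. -/
def IsTransition {N : ℕ} (A : Matrix (Fin N) (Fin N) ℕ) : Prop :=
  (∀ i j, A i j = 0 ∨ A i j = 1) ∧ (∀ i, ∃ j, A i j = 1) ∧ (∀ j, ∃ i, A i j = 1)

/-- `V_α^{m,n} = ⋂_{k=0}^m (f_n^k)⁻¹(V_{α_k})`, the set of points whose itinerary along
the sets `V_i` under `f_{n,∞}` follows `α` for `m+1` steps. -/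
def itinSet {X : Type*} {N : ℕ} {A : Matrix (Fin N) (Fin N) ℕ}
    (f : ℕ → X → X) (V : Fin N → Set X) (α : SigmaA A) (m n : ℕ) : Set X :=
  ⋂ k ∈ Finset.range (m + 1), itr f n k ⁻¹' V (α.1 k)

/-!
Every admissible itinerary `α` pins down one point `x_n(α) = ⋂_m V_α^{m,n}`: the sets are
nonempty by coupled expansion, closed in a compact space, and eventually `γ`-small for every
entourage `γ`. Reading one more symbol of `α` is applying `f_n`, so `π_n` semiconjugates the
shift, and shrinking makes `π_n` continuous. Compactness of `Σ_N^+(A)` makes the shrinking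
uniform in `α`: for each `γ` there is `M` such that points whose itineraries share the first
`M + 1` symbols are `γ`-close. Hence two points of an `(n, γ)`-separated subset of `Λ_0` have
itineraries differing in the first `n + M + 1` symbols, so there are at most
`∑_{i,j} (A^{n+M})_{ij}` of them, and this count grows like `λ(A)^n`.
-/

open Topology

section CoupledExpansion

variable {X : Type*} {N : ℕ} {A : Matrix (Fin N) (Fin N) ℕ}

section Itinerary

theorem itr_succ' (f : ℕ → X → X) (n : ℕ) : ∀ (k : ℕ) (x : X),
    itr f n (k + 1) x = itr f (n + 1) k (f n x)
  | 0, _ => rfl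
  | k + 1, x => by
    show f (n + (k + 1)) (itr f n (k + 1) x) = f (n + 1 + k) (itr f (n + 1) k (f n x))
    rw [itr_succ' f n k x, Nat.add_right_comm, Nat.add_assoc]

theorem continuous_itr [TopologicalSpace X] {f : ℕ → X → X} (hf : ∀ n, Continuous (f n))
    (n : ℕ) : ∀ k, Continuous (itr f n k)
  | 0 => continuous_id
  | k + 1 => (hf (n + k)).comp (continuous_itr hf n k)

variable {f : ℕ → X → X} {V : Fin N → Set X}

theorem mem_itinSet {α : SigmaA A} {m n : ℕ} {x : X} :
    x ∈ itinSet f V α m n ↔ ∀ k ≤ m, itr f n k x ∈ V (α.1 k) := by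
  simp [itinSet]

theorem itinSet_succ (α : SigmaA A) (m n : ℕ) :
    itinSet f V α (m + 1) n = V (α.1 0) ∩ f n ⁻¹' itinSet f V (shiftA α) m (n + 1) := by
  ext x
  simp only [mem_itinSet, mem_inter_iff, mem_preimage, ← itr_succ']
  constructor
  · exact fun h => ⟨h 0 (Nat.zero_le _), fun k hk => h (k + 1) (by omega)⟩
  · rintro ⟨h0, h⟩ (_ | k) hk
    exacts [h0, h k (by omega)]

theorem itinSet_antitone (α : SigmaA A) (n : ℕ) : Antitone fun m => itinSet f V α m n :=
  fun _ _ hm _ hx => mem_itinSet.2 fun k hk => mem_itinSet.1 hx k (hk.trans hm)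

theorem itinSet_congr {α β : SigmaA A} {m : ℕ} (h : ∀ k ≤ m, α.1 k = β.1 k) (n : ℕ) :
    itinSet f V α m n = itinSet f V β m n := by
  ext x
  simp only [mem_itinSet]
  exact forall₂_congr fun k hk => by rw [h k hk]

theorem isClosed_itinSet [TopologicalSpace X] (hf : ∀ n, Continuous (f n))
    (hVcl : ∀ i, IsClosed (V i)) (α : SigmaA A) (m n : ℕ) : IsClosed (itinSet f V α m n) :=
  isClosed_biInter fun k _ => (hVcl _).preimage (continuous_itr hf n k)

theorem itinSet_nonempty (hVne : ∀ i, (V i).Nonempty)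
    (hexp : ∀ n : ℕ, ∀ i : Fin N, (⋃ j ∈ {j | A i j = 1}, V j) ⊆ f n '' V i) :
    ∀ (m : ℕ) (α : SigmaA A) (n : ℕ), (itinSet f V α m n).Nonempty
  | 0, α, _ => (hVne (α.1 0)).mono fun _ hx => mem_itinSet.2 fun k hk => by
      rwa [Nat.le_zero.1 hk]
  | m + 1, α, n => by
    obtain ⟨y, hy⟩ := itinSet_nonempty hVne hexp m (shiftA α) (n + 1)
    obtain ⟨x, hx, rfl⟩ := hexp n (α.1 0) (mem_biUnion (α.2 0) (mem_itinSet.1 hy 0 (Nat.zero_le m)))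
    exact ⟨x, itinSet_succ α m n ▸ ⟨hx, hy⟩⟩

theorem iInter_itinSet_nonempty [TopologicalSpace X] [CompactSpace X]
    (hf : ∀ n, Continuous (f n)) (hVne : ∀ i, (V i).Nonempty) (hVcl : ∀ i, IsClosed (V i))
    (hexp : ∀ n : ℕ, ∀ i : Fin N, (⋃ j ∈ {j | A i j = 1}, V j) ⊆ f n '' V i)
    (α : SigmaA A) (n : ℕ) : (⋂ m, itinSet f V α m n).Nonempty :=
  IsCompact.nonempty_iInter_of_sequence_nonempty_isCompact_isClosed _
    (fun m => itinSet_antitone α n m.le_succ) (fun m => itinSet_nonempty hVne hexp m α n)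
    (isClosed_itinSet hf hVcl α 0 n).isCompact (isClosed_itinSet hf hVcl α · n)

end Itinerary

section Shift

instance : TopologicalSpace (SigmaA A) := instTopologicalSpaceSubtype

instance : CompactSpace (SigmaA A) := by
  have : IsClosed {s : ℕ → Fin N | ∀ j, A (s j) (s (j + 1)) = 1} := by
    rw [ofPred_forall]
    refine isClosed_iInter fun j => ?_
    have hpair : Continuous fun s : ℕ → Fin N => (s j, s (j + 1)) := by fun_prop
    exact (isClosed_discrete {p : Fin N × Fin N | A p.1 p.2 = 1}).preimage hpair
  exact isCompact_iff_compactSpace.mp this.isCompact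

theorem isOpen_cylinder (α : SigmaA A) (M : ℕ) :
    IsOpen {β : SigmaA A | ∀ k ≤ M, β.1 k = α.1 k} := by
  have : {β : SigmaA A | ∀ k ≤ M, β.1 k = α.1 k} = ⋂ k ∈ Iic M, {β | β.1 k = α.1 k} := by
    ext; simp
  rw [this]
  exact (finite_Iic M).isOpen_biInter fun k _ => (isOpen_discrete {α.1 k}).preimage
    ((continuous_apply k).comp continuous_subtype_val : Continuous fun β : SigmaA A => β.1 k)

theorem shiftA_iterate_apply (α : SigmaA A) (j k : ℕ) : (shiftA^[j] α).1 k = α.1 (k + j) := by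
  induction j generalizing α with
  | zero => rfl
  | succ j ih => rw [Function.iterate_succ_apply, ih]; rfl

theorem shiftA_surjective (hcol : ∀ j, ∃ i, A i j = 1) : Function.Surjective (shiftA (A := A)) :=
  fun β =>
    let ⟨i, hi⟩ := hcol (β.1 0)
    ⟨⟨fun k => Nat.casesOn k i β.1, fun j => Nat.casesOn j hi β.2⟩, rfl⟩

theorem SigmaA.nonempty (hrow : ∀ i, ∃ j, A i j = 1) (hN : 0 < N) : Nonempty (SigmaA A) := by
  choose next hnext using hrow
  exact ⟨⟨fun k => next^[k] ⟨0, hN⟩, fun k => by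
    show A (next^[k] _) (next^[k + 1] _) = 1
    rw [Function.iterate_succ_apply']
    exact hnext _⟩⟩

theorem coord_eq_of_rho_lt {α β : SigmaA A} {M k : ℕ} (h : rho α β < (1 / 2 : ℝ) ^ M)
    (hk : k ≤ M) : α.1 k = β.1 k := by
  by_contra hne
  have hsum : Summable fun i => if α.1 i = β.1 i then 0 else (1 / 2 : ℝ) ^ i :=
    summable_geometric_two.of_nonneg_of_le (fun i => by split_ifs <;> positivity)
      (fun i => by split_ifs <;> simp)
  have hterm := hsum.le_tsum k fun i _ => by split_ifs <;> positivity
  rw [if_neg hne] at hterm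
  exact (h.trans_le (pow_le_pow_of_le_one (by norm_num) (by norm_num) hk)).not_ge hterm

end Shift

section Point

variable {f : ℕ → X → X} {V : Fin N → Set X}

theorem exists_uniform_itinSet_small {γ : Set (X × X)}
    (h : ∀ α : SigmaA A, ∃ M, ∀ n, itinSet f V α M n ×ˢ itinSet f V α M n ⊆ γ) :
    ∃ M, ∀ (α : SigmaA A) n, itinSet f V α M n ×ˢ itinSet f V α M n ⊆ γ := by
  choose M hM using h
  obtain ⟨t, ht⟩ := isCompact_univ.elim_finite_subcover
    (fun α => {β : SigmaA A | ∀ k ≤ M α, β.1 k = α.1 k}) (fun α => isOpen_cylinder α (M α))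
    fun β _ => mem_iUnion.2 ⟨β, fun _ _ => rfl⟩
  refine ⟨t.sup M, fun β n => ?_⟩
  obtain ⟨α, hαt, hβα⟩ := mem_iUnion₂.1 (ht (mem_univ β))
  have hsub : itinSet f V β (t.sup M) n ⊆ itinSet f V α (M α) n :=
    itinSet_congr hβα n ▸ itinSet_antitone β n (Finset.le_sup hαt)
  exact (prod_mono hsub hsub).trans (hM α n)

def IsItinPoint (f : ℕ → X → X) (V : Fin N → Set X) (x : SigmaA A → ℕ → X) : Prop :=
  ∀ α n, ⋂ m, itinSet f V α m n = {x α n}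

variable {x : SigmaA A → ℕ → X}

theorem itinPoint_mem (hx : IsItinPoint f V x) (α : SigmaA A) (n m : ℕ) :
    x α n ∈ itinSet f V α m n :=
  mem_iInter.1 ((hx α n).superset rfl) m

theorem map_itinPoint (hx : IsItinPoint f V x) (α : SigmaA A) (n : ℕ) :
    f n (x α n) = x (shiftA α) (n + 1) := by
  have : f n (x α n) ∈ ⋂ m, itinSet f V (shiftA α) m (n + 1) :=
    mem_iInter.2 fun m => (itinSet_succ α m n ▸ itinPoint_mem hx α n (m + 1)).2
  rwa [hx] at this

theorem itr_itinPoint (hx : IsItinPoint f V x) (α : SigmaA A) (n j : ℕ) :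
    itr f n j (x α n) = x (shiftA^[j] α) (n + j) := by
  induction j with
  | zero => rfl
  | succ j ih =>
    show f (n + j) (itr f n j (x α n)) = _
    rw [ih, map_itinPoint hx, Function.iterate_succ_apply']
    rfl

theorem itinPoint_mem_entourage (hx : IsItinPoint f V x)
    {α β : SigmaA A} {n M : ℕ} {γ : Set (X × X)} (hαβ : ∀ k ≤ M, α.1 k = β.1 k)
    (hM : itinSet f V α M n ×ˢ itinSet f V α M n ⊆ γ) : (x α n, x β n) ∈ γ :=
  hM ⟨itinPoint_mem hx α n M, itinSet_congr hαβ n ▸ itinPoint_mem hx β n M⟩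

theorem range_itinPoint_subset (hx : IsItinPoint f V x) (n : ℕ) :
    (range fun α => x α n) ⊆ ⋃ i, V i :=
  range_subset_iff.2 fun α =>
    mem_iUnion.2 ⟨α.1 0, mem_itinSet.1 (itinPoint_mem hx α n 0) 0 le_rfl⟩

theorem image_range_itinPoint (hx : IsItinPoint f V x) (hcol : ∀ j, ∃ i, A i j = 1) (n : ℕ) :
    f n '' (range fun α => x α n) = range fun α => x α (n + 1) := by
  rw [← range_comp]
  simp only [Function.comp_def, map_itinPoint hx]
  exact (shiftA_surjective hcol).range_comp fun β => x β (n + 1)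

end Point

section Uniform

variable [UniformSpace X] {f : ℕ → X → X} {V : Fin N → Set X}

def ItinShrinks (A : Matrix (Fin N) (Fin N) ℕ) (f : ℕ → X → X) (V : Fin N → Set X) : Prop :=
  ∀ α : SigmaA A, ∀ γ ∈ 𝓤 X, ∃ M, ∀ n, itinSet f V α M n ×ˢ itinSet f V α M n ⊆ γ

theorem iInter_itinSet_subsingleton [T0Space X] {α : SigmaA A} {n : ℕ}
    (h : ∀ γ ∈ 𝓤 X, ∃ M, itinSet f V α M n ×ˢ itinSet f V α M n ⊆ γ) :
    (⋂ m, itinSet f V α m n).Subsingleton := fun _ hx _ hy =>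
  eq_of_uniformity fun hγ =>
    let ⟨M, hM⟩ := h _ hγ
    hM ⟨mem_iInter.1 hx M, mem_iInter.1 hy M⟩

theorem exists_itinPoint [CompactSpace X] [T0Space X] (hf : ∀ n, Continuous (f n))
    (hVne : ∀ i, (V i).Nonempty) (hVcl : ∀ i, IsClosed (V i))
    (hexp : ∀ n : ℕ, ∀ i : Fin N, (⋃ j ∈ {j | A i j = 1}, V j) ⊆ f n '' V i)
    (hsmall : ItinShrinks A f V) :
    ∃ x : SigmaA A → ℕ → X, IsItinPoint f V x := by
  choose x hx using fun α n =>
    (iInter_itinSet_subsingleton fun γ hγ =>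
      (hsmall α γ hγ).imp fun _ hM => hM n).eq_empty_or_singleton.resolve_left
      (iInter_itinSet_nonempty hf hVne hVcl hexp α n).ne_empty
  exact ⟨x, hx⟩

variable {x : SigmaA A → ℕ → X}

theorem continuous_itinPoint (hx : IsItinPoint f V x) (hsmall : ItinShrinks A f V) (n : ℕ) :
    Continuous fun α => x α n := by
  refine continuous_iff_continuousAt.2 fun α => Uniform.tendsto_nhds_right.2 fun γ hγ => ?_
  obtain ⟨M, hM⟩ := hsmall α γ hγ
  exact mem_map.2 <| mem_of_superset ((isOpen_cylinder α M).mem_nhds fun _ _ => rfl) fun β hβ =>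
    itinPoint_mem_entourage hx (fun k hk => (hβ k hk).symm) (hM n)

theorem exists_rho_lt_itinPoint_mem (hx : IsItinPoint f V x) (hsmall : ItinShrinks A f V)
    {γ : Set (X × X)} (hγ : γ ∈ 𝓤 X) :
    ∃ δ : ℝ, 0 < δ ∧ ∀ α β : SigmaA A, ∀ n : ℕ, rho α β < δ → (x α n, x β n) ∈ γ := by
  obtain ⟨M, hM⟩ := exists_uniform_itinSet_small fun α => hsmall α γ hγ
  exact ⟨(1 / 2) ^ M, by positivity, fun α β n h =>
    itinPoint_mem_entourage hx (fun _ hk => coord_eq_of_rho_lt h hk) (hM α n)⟩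

end Uniform


section Growth

open Finset

theorem sum_mul_apply_row {ι : Type*} [Fintype ι] {R : Type*} [NonUnitalNonAssocSemiring R]
    (B C : Matrix ι ι R) (i : ι) : ∑ k, (B * C) i k = ∑ j, B i j * ∑ k, C j k := by
  simp_rw [Matrix.mul_apply, mul_sum]
  exact sum_comm

def pathCount (A : Matrix (Fin N) (Fin N) ℕ) (L : ℕ) : ℕ := ∑ i, ∑ j, (A ^ L) i j

def admissibleWords (A : Matrix (Fin N) (Fin N) ℕ) (L : ℕ) : Finset (Fin (L + 1) → Fin N) :=
  {w | ∀ k : Fin L, A (w k.castSucc) (w k.succ) = 1}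

def admissibleWordsFrom (A : Matrix (Fin N) (Fin N) ℕ) (L : ℕ) (i : Fin N) :
    Finset (Fin (L + 1) → Fin N) :=
  {w ∈ admissibleWords A L | w 0 = i}

theorem card_admissibleWordsFrom_le :
    ∀ (L : ℕ) (i : Fin N), #(admissibleWordsFrom A L i) ≤ ∑ j, (A ^ L) i j
  | 0, i => by
    calc #(admissibleWordsFrom A 0 i) ≤ 1 := card_le_one.2 fun w hw w' hw' =>
          funext fun k => by rw [Fin.fin_one_eq_zero k, (mem_filter.1 hw).2, (mem_filter.1 hw').2]
      _ = ∑ j, (A ^ 0) i j := by simp [Matrix.one_apply]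
  | L + 1, i => by
    let tail : (Fin (L + 2) → Fin N) → Fin (L + 1) → Fin N := Fin.tail
    have hmaps : ∀ w ∈ admissibleWordsFrom A (L + 1) i,
        tail w ∈ ({j | A i j = 1} : Finset (Fin N)).biUnion (admissibleWordsFrom A L) := by
      intro w hw
      simp only [admissibleWordsFrom, admissibleWords, Finset.mem_filter, Finset.mem_univ,
        true_and, Finset.mem_biUnion] at hw ⊢
      exact ⟨w 1, hw.2 ▸ hw.1 0, fun k => hw.1 k.succ, rfl⟩
    have hinj : Set.InjOn tail (admissibleWordsFrom A (L + 1) i) := by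
      intro w hw w' hw' (h : Fin.tail w = Fin.tail w')
      rw [← Fin.cons_self_tail w, ← Fin.cons_self_tail w', h, (mem_filter.1 hw).2,
        (mem_filter.1 hw').2]
    calc #(admissibleWordsFrom A (L + 1) i)
        ≤ #(({j | A i j = 1} : Finset (Fin N)).biUnion (admissibleWordsFrom A L)) :=
          card_le_card_of_injOn tail hmaps hinj
      _ ≤ ∑ j ∈ {j | A i j = 1}, #(admissibleWordsFrom A L j) := card_biUnion_le
      _ ≤ ∑ j ∈ {j | A i j = 1}, A i j * ∑ k, (A ^ L) j k := sum_le_sum fun j hj => by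
          rw [(mem_filter.1 hj).2, one_mul]
          exact card_admissibleWordsFrom_le L j
      _ ≤ ∑ j, A i j * ∑ k, (A ^ L) j k := sum_le_sum_of_subset (filter_subset _ _)
      _ = ∑ k, (A ^ (L + 1)) i k := by rw [pow_succ', sum_mul_apply_row]

theorem card_admissibleWords_le (L : ℕ) : #(admissibleWords A L) ≤ pathCount A L := by
  rw [card_eq_sum_card_fiberwise (f := fun w => w 0) (t := univ) fun _ _ => mem_coe.2 (mem_univ _)]
  exact sum_le_sum fun i _ => card_admissibleWordsFrom_le L i

theorem one_le_sum_pow_apply (hrow : ∀ i, ∃ j, A i j = 1) :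
    ∀ (L : ℕ) (i : Fin N), 1 ≤ ∑ j, (A ^ L) i j
  | 0, i => by simp [Matrix.one_apply]
  | L + 1, i => by
    obtain ⟨j, hj⟩ := hrow i
    rw [pow_succ', sum_mul_apply_row]
    calc 1 ≤ A i j * ∑ k, (A ^ L) j k := by rw [hj, one_mul]; exact one_le_sum_pow_apply hrow L j
      _ ≤ ∑ j, A i j * ∑ k, (A ^ L) j k :=
        single_le_sum (f := fun j => A i j * ∑ k, (A ^ L) j k) (fun _ _ => Nat.zero_le _)
          (mem_univ j)

theorem pathCount_pos (hrow : ∀ i, ∃ j, A i j = 1) (hN : 0 < N) (L : ℕ) : 0 < pathCount A L :=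
  (one_le_sum_pow_apply hrow L ⟨0, hN⟩).trans
    (single_le_sum (f := fun i => ∑ j, (A ^ L) i j) (fun _ _ => Nat.zero_le _) (mem_univ _))

theorem pathCount_add_le (A : Matrix (Fin N) (Fin N) ℕ) (m k : ℕ) :
    pathCount A (m + k) ≤ pathCount A m * pathCount A k :=
  calc pathCount A (m + k) = ∑ i, ∑ l, (A ^ m) i l * ∑ j, (A ^ k) l j := by
        simp only [pathCount, pow_add, sum_mul_apply_row]
    _ ≤ ∑ i, ∑ l, (A ^ m) i l * pathCount A k := by
        gcongr with i _ l _
        exact single_le_sum (f := fun l => ∑ j, (A ^ k) l j) (fun _ _ => Nat.zero_le _) (mem_univ l)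
    _ = pathCount A m * pathCount A k := by simp only [pathCount, sum_mul]

theorem tendsto_log_pathCount_div (hrow : ∀ i, ∃ j, A i j = 1) (hN : 0 < N) :
    Tendsto (fun n : ℕ => Real.log (pathCount A n) / n) atTop (𝓝 (Real.log (lamA A))) := by
  have hpos : ∀ n, (0 : ℝ) < pathCount A n := fun n => by exact_mod_cast pathCount_pos hrow hN n
  have hsub : Subadditive fun n => Real.log (pathCount A n) := fun m n => by
    rw [← Real.log_mul (hpos m).ne' (hpos n).ne']
    exact Real.log_le_log (hpos _) (by exact_mod_cast pathCount_add_le A m n)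
  have hlim := hsub.tendsto_lim ⟨0, forall_mem_range.2 fun n =>
    div_nonneg (Real.log_nonneg (by exact_mod_cast pathCount_pos hrow hN n)) n.cast_nonneg⟩
  have hlam : Tendsto (fun n : ℕ => (pathCount A n : ℝ) ^ (n : ℝ)⁻¹) atTop
      (𝓝 (Real.exp hsub.lim)) := by
    refine ((Real.continuous_exp.tendsto _).comp hlim).congr fun n => ?_
    rw [Function.comp_apply, Real.rpow_def_of_pos (hpos n), div_eq_mul_inv]
  rwa [show lamA A = Real.exp hsub.lim from hlam.limsup_eq, Real.log_exp]

theorem tendsto_log_pathCount_add_div (hrow : ∀ i, ∃ j, A i j = 1) (hN : 0 < N) (c : ℕ) :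
    Tendsto (fun n : ℕ => Real.log (pathCount A (n + c)) / n) atTop (𝓝 (Real.log (lamA A))) := by
  have h := ((tendsto_log_pathCount_div hrow hN).comp (tendsto_add_atTop_nat c)).div
    (tendsto_natCast_div_add_atTop (c : ℝ)) one_ne_zero
  rw [div_one] at h
  refine h.congr' ?_
  filter_upwards [eventually_gt_atTop 0] with n hn
  have : (n : ℝ) ≠ 0 := by positivity
  simp only [Pi.div_apply, Function.comp_apply, Nat.cast_add]
  field_simp

end Growth

section Entropy

theorem entropy_le_of_sepCard_le [UniformSpace X] {f : ℕ → X → X} {Λ : Set X} {ℓ : ℝ}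
    (h : ∀ γ ∈ 𝓤 X, ∃ g : ℕ → ℕ, (∀ n, 0 < g n) ∧ (∀ n, sepCard f Λ n γ ≤ g n) ∧
      Tendsto (fun n : ℕ => Real.log (g n) / n) atTop (𝓝 ℓ)) :
    entropy f Λ ≤ ℓ := by
  refine iSup₂_le fun γ hγ => ?_
  obtain ⟨g, hpos, hle, hlim⟩ := h γ hγ
  have hlog : ∀ n, Real.log (sepCard f Λ n γ) ≤ Real.log (g n) := fun n => by
    rcases (sepCard f Λ n γ).eq_zero_or_pos with h0 | h0
    · rw [h0, Nat.cast_zero, Real.log_zero]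
      exact Real.log_nonneg (by exact_mod_cast hpos n)
    · exact Real.log_le_log (by exact_mod_cast h0) (by exact_mod_cast hle n)
  calc atTop.limsup (fun n : ℕ => ((Real.log (sepCard f Λ n γ) / n : ℝ) : EReal))
      ≤ atTop.limsup fun n : ℕ => ((Real.log (g n) / n : ℝ) : EReal) :=
        limsup_le_limsup (Eventually.of_forall fun n =>
          EReal.coe_le_coe_iff.2 (div_le_div_of_nonneg_right (hlog n) n.cast_nonneg))
    _ = ℓ := ((continuous_coe_real_ereal.tendsto ℓ).comp hlim).limsup_eq

variable {f : ℕ → X → X} {V : Fin N → Set X} {x : SigmaA A → ℕ → X}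

theorem sepCard_range_itinPoint_le [Nonempty (SigmaA A)] (hx : IsItinPoint f V x)
    {γ : Set (X × X)} {M : ℕ}
    (hM : ∀ (α : SigmaA A) n, itinSet f V α M n ×ˢ itinSet f V α M n ⊆ γ) (n : ℕ) :
    sepCard f (range fun α => x α 0) n γ ≤ pathCount A (n + M) := by
  refine csSup_le' ?_
  rintro _ ⟨E, hEΛ, hEsep, rfl⟩
  choose! α hα using fun y (hy : y ∈ (E : Set X)) => hEΛ hy
  let word : X → Fin (n + M + 1) → Fin N := fun y k => (α y).1 k
  have hmaps : Set.MapsTo word E (admissibleWords A (n + M)) := fun y _ =>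
    Finset.mem_filter.2 ⟨Finset.mem_univ _, fun k => (α y).2 k⟩
  have hinj : Set.InjOn word E := by
    intro y hy z hz hyz
    by_contra hne
    obtain ⟨j, hj, hsep⟩ := hEsep y hy z hz hne
    apply hsep
    rw [← hα y hy, ← hα z hz, itr_itinPoint hx, itr_itinPoint hx]
    refine itinPoint_mem_entourage hx (fun k hk => ?_) (hM _ _)
    rw [shiftA_iterate_apply, shiftA_iterate_apply]
    exact congrFun hyz ⟨k + j, by omega⟩
  exact (Finset.card_le_card_of_injOn word hmaps hinj).trans (card_admissibleWords_le _)

end Entropy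

end CoupledExpansion

/-- For an `A`-coupled-expanding system whose itinerary sets shrink uniformly
(condition (ii)), every itinerary determines a unique point `x_n(α)`; the resulting sets
`Λ_n = {x_n(α)}` are nonempty and compact with `f_n(Λ_n) = Λ_{n+1}`, the maps
`π_n(α) = x_n(α)` form an equi-continuous family semiconjugating the shift `σ_A` to the
subsystem; consequently `h(f_{0,∞}, Λ_0) ≤ log λ(A)`. -/
theorem coupled_expanding_upper_bound {X : Type*} [UniformSpace X] [CompactSpace X]
    [T2Space X]
    (f : ℕ → X → X) (hf : ∀ n, Continuous (f n))
    (N : ℕ) (hN : 2 ≤ N) (A : Matrix (Fin N) (Fin N) ℕ) (hA : IsTransition A)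
    (V : Fin N → Set X) (hVne : ∀ i, (V i).Nonempty) (hVcl : ∀ i, IsClosed (V i))
    (hexp : ∀ n : ℕ, ∀ i : Fin N, (⋃ j ∈ {j | A i j = 1}, V j) ⊆ f n '' V i)
    (hshrink : ∀ α : SigmaA A, ∀ γ ∈ 𝓤 X, ∃ M : ℕ, 1 ≤ M ∧ ∀ m ≥ M, ∀ n : ℕ,
      ∀ x ∈ itinSet f V α m n, ∀ y ∈ itinSet f V α m n, (x, y) ∈ γ) :
    ∃ x : SigmaA A → ℕ → X,
      (∀ α n, (⋂ m : ℕ, itinSet f V α m n) = {x α n}) ∧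
      (∀ n, (Set.range fun α => x α n).Nonempty) ∧
      (∀ n, IsCompact (Set.range fun α => x α n)) ∧
      (∀ n, (Set.range fun α => x α n) ⊆ ⋃ i, V i) ∧
      (∀ n, f n '' (Set.range fun α => x α n) = Set.range fun α => x α (n + 1)) ∧
      (∀ α n, f n (x α n) = x (shiftA α) (n + 1)) ∧
      (∀ γ ∈ 𝓤 X, ∃ δ : ℝ, 0 < δ ∧
        ∀ α β : SigmaA A, ∀ n : ℕ, rho α β < δ → (x α n, x β n) ∈ γ) ∧
      entropy f (Set.range fun α => x α 0) ≤ (Real.log (lamA A) : EReal) := by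
  have hsmall : ItinShrinks A f V := fun α γ hγ =>
    let ⟨M, _, hM⟩ := hshrink α γ hγ
    ⟨M, fun n p hp => hM M le_rfl n _ hp.1 _ hp.2⟩
  have hN0 : 0 < N := by omega
  have : Nonempty (SigmaA A) := SigmaA.nonempty hA.2.1 hN0
  obtain ⟨x, hx⟩ := exists_itinPoint hf hVne hVcl hexp hsmall
  refine ⟨x, hx, fun n => range_nonempty _,
    fun n => isCompact_range (continuous_itinPoint hx hsmall n), range_itinPoint_subset hx,
    image_range_itinPoint hx hA.2.2, map_itinPoint hx,
    fun γ hγ => exists_rho_lt_itinPoint_mem hx hsmall hγ,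
    entropy_le_of_sepCard_le fun γ hγ => ?_⟩
  obtain ⟨M, hM⟩ := exists_uniform_itinSet_small fun α => hsmall α γ hγ
  exact ⟨fun n => pathCount A (n + M), fun n => pathCount_pos hA.2.1 hN0 _,
    sepCard_range_itinPoint_le hx hM, tendsto_log_pathCount_add_div hA.2.1 hN0 M⟩
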